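/- arXiv:2105.06029 — 4 statements merged into one kernel-verified Lean document; each statement's English description precedes it below -/
import Mathlib

section
/- Fix a state s. For two sequences u = (u₁,…,u_H) and u' = (u'₁,…,u'_H) of reals, the optimal Q-functions of the corresponding absorbing MDPs satisfy max_{h∈[H]} ‖Q*_{h,{s,u}} − Q*_{h,{s,u'}}‖_∞ ≤ H · max_{t∈[H]} |u_t − u'_t|. -/
open Finset

section MDPDefs

variable {S A : Type*}

/-- `P` is a transition kernel: each row `P s a` is a probability distribution on states. -/
def IsKernel [Fintype S] (P : S → A → S → ℝ) : Prop :=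
  ∀ s a, (∀ s', 0 ≤ P s a s') ∧ (∑ s' : S, P s a s') = 1

/-- `π` is a (non-stationary, stochastic) policy: `π h s` is a distribution over actions. -/
def IsPolicy [Fintype A] (π : ℕ → S → A → ℝ) : Prop :=
  ∀ h s, (∀ a, 0 ≤ π h s a) ∧ (∑ a : A, π h s a) = 1

/-- Q-function with `m` steps remaining (fuel) starting from time `h`,
time-dependent reward `r`. -/
noncomputable def Qf [Fintype S] [Fintype A] (P : S → A → S → ℝ) (r : ℕ → S → A → ℝ)
    (π : ℕ → S → A → ℝ) : ℕ → ℕ → S → A → ℝ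
  | 0, _, _, _ => 0
  | m + 1, h, s, a =>
      r h s a + ∑ s' : S, P s a s' * ∑ a' : A, π (h + 1) s' a' * Qf P r π m (h + 1) s' a'

/-- `Qpi P r π H h` is the step-`h` Q-function `Q^π_h` of the horizon-`H` MDP
(with `Q^π_{H+1} = 0`). -/
noncomputable def Qpi [Fintype S] [Fintype A] (P : S → A → S → ℝ) (r : ℕ → S → A → ℝ)
    (π : ℕ → S → A → ℝ) (H h : ℕ) (s : S) (a : A) : ℝ :=
  Qf P r π (H + 1 - h) h s a

/-- `Vpi P r π H h` is the step-`h` value function `V^π_h`. -/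
noncomputable def Vpi [Fintype S] [Fintype A] (P : S → A → S → ℝ) (r : ℕ → S → A → ℝ)
    (π : ℕ → S → A → ℝ) (H h : ℕ) (s : S) : ℝ :=
  ∑ a : A, π h s a * Qpi P r π H h s a

/-- Optimal value function by fuel `m` (steps remaining) at time `h`:
`V*_h = VstarT P r (H+1-h) h`. -/
noncomputable def VstarT [Fintype S] [Fintype A] [Nonempty A] (P : S → A → S → ℝ)
    (r : ℕ → S → A → ℝ) : ℕ → ℕ → S → ℝ
  | 0, _, _ => 0
  | m + 1, h, s =>
      Finset.univ.sup' Finset.univ_nonempty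
        (fun a : A => r h s a + ∑ s' : S, P s a s' * VstarT P r m (h + 1) s')

/-- Optimal Q-function by fuel `m` at time `h`: `Q*_h = QstarT P r (H+1-h) h`. -/
noncomputable def QstarT [Fintype S] [Fintype A] [Nonempty A] (P : S → A → S → ℝ)
    (r : ℕ → S → A → ℝ) : ℕ → ℕ → S → A → ℝ
  | 0, _, _, _ => 0
  | m + 1, h, s, a => r h s a + ∑ s' : S, P s a s' * VstarT P r m (h + 1) s'

/-- Transition kernel of the MDP in which the state `s0` is absorbing. -/
def Pabs [DecidableEq S] (P : S → A → S → ℝ) (s0 : S) : S → A → S → ℝ :=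
  fun s a s' => if s = s0 then (if s' = s0 then 1 else 0) else P s a s'

/-- Reward of the absorbing MDP `M_{s0,u}`: at state `s0` the time-`t` reward is `u t`,
elsewhere it agrees with `r`. -/
def rAbs [DecidableEq S] (r : ℕ → S → A → ℝ) (s0 : S) (u : ℕ → ℝ) : ℕ → S → A → ℝ :=
  fun t s a => if s = s0 then u t else r t s a

/-- The state-action transition operator `P^{π_i}` applied to `f : S × A → ℝ`. -/
noncomputable def Ppi [Fintype S] [Fintype A] (P : S → A → S → ℝ) (π : ℕ → S → A → ℝ)
    (i : ℕ) (f : S → A → ℝ) : S → A → ℝ :=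
  fun s a => ∑ s' : S, P s a s' * ∑ a' : A, π i s' a' * f s' a'

/-- `GammaK P π lo k` is the multi-step transition `Γ^π_{lo : lo+k-1} = P^{π_lo} ⋯ P^{π_{lo+k-1}}`
applied to a state-action function (`k = 0` gives the identity). -/
noncomputable def GammaK [Fintype S] [Fintype A] (P : S → A → S → ℝ) (π : ℕ → S → A → ℝ) :
    ℕ → ℕ → (S → A → ℝ) → S → A → ℝ
  | _, 0, f => f
  | lo, k + 1, f => Ppi P π lo (GammaK P π (lo + 1) k f)

/-- Variance of `V` under the distribution `Q` on a finite set. -/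
noncomputable def varD [Fintype S] (Q : S → ℝ) (V : S → ℝ) : ℝ :=
  (∑ s : S, Q s * (V s) ^ 2) - (∑ s : S, Q s * V s) ^ 2

/-- The stochastic policy associated with a deterministic policy. -/
def detPol [DecidableEq A] (π : ℕ → S → A) : ℕ → S → A → ℝ :=
  fun h s a => if a = π h s then 1 else 0

/-- Probability of a trajectory `(s_1, a_1, …, s_H, a_H, s_{H+1})` under initial
distribution `d1`, behavior policy `μ`, and transition `P`. -/
noncomputable def trajProb (H : ℕ) (d1 : S → ℝ) (μ : ℕ → S → A → ℝ) (P : S → A → S → ℝ)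
    (τ : (Fin (H + 1) → S) × (Fin H → A)) : ℝ :=
  d1 (τ.1 0) *
    ∏ t : Fin H,
      (μ (t.1 + 1) (τ.1 t.castSucc) (τ.2 t) * P (τ.1 t.castSucc) (τ.2 t) (τ.1 t.succ))

/-- Probability of a dataset of `n` i.i.d. episodes. -/
noncomputable def dataProb (H n : ℕ) (d1 : S → ℝ) (μ : ℕ → S → A → ℝ) (P : S → A → S → ℝ)
    (D : Fin n → (Fin (H + 1) → S) × (Fin H → A)) : ℝ :=
  ∏ i : Fin n, trajProb H d1 μ P (D i)

/-- Marginal state distribution: `stateOcc d1 μ P k` is the distribution of `s_{k+1}`. -/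
noncomputable def stateOcc [Fintype S] [Fintype A] (d1 : S → ℝ) (μ : ℕ → S → A → ℝ)
    (P : S → A → S → ℝ) : ℕ → S → ℝ
  | 0, s => d1 s
  | k + 1, s' => ∑ s : S, ∑ a : A, stateOcc d1 μ P k s * μ (k + 1) s a * P s a s'

/-- Marginal state-action occupancy `d^μ_t(s,a)` (for `t ≥ 1`). -/
noncomputable def occu [Fintype S] [Fintype A] (d1 : S → ℝ) (μ : ℕ → S → A → ℝ)
    (P : S → A → S → ℝ) (t : ℕ) (s : S) (a : A) : ℝ :=
  stateOcc d1 μ P (t - 1) s * μ t s a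

/-- Number of visits to the state-action pair `(s,a)` in the dataset `D`. -/
def cnt2 [DecidableEq S] [DecidableEq A] (H n : ℕ)
    (D : Fin n → (Fin (H + 1) → S) × (Fin H → A)) (s : S) (a : A) : ℕ :=
  ∑ i : Fin n, ∑ t : Fin H, if (D i).1 t.castSucc = s ∧ (D i).2 t = a then 1 else 0

/-- Number of visits to the transition `(s,a,s')` in the dataset `D`. -/
def cnt3 [DecidableEq S] [DecidableEq A] (H n : ℕ)
    (D : Fin n → (Fin (H + 1) → S) × (Fin H → A)) (s : S) (a : A) (s' : S) : ℕ :=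
  ∑ i : Fin n, ∑ t : Fin H,
    if (D i).1 t.castSucc = s ∧ (D i).2 t = a ∧ (D i).1 t.succ = s' then 1 else 0

/-- The empirical (plug-in) transition kernel built from the dataset `D`. -/
noncomputable def empP [Fintype S] [DecidableEq S] [DecidableEq A] (H n : ℕ)
    (D : Fin n → (Fin (H + 1) → S) × (Fin H → A)) : S → A → S → ℝ :=
  fun s a s' =>
    if cnt2 H n D s a = 0 then 1 / (Fintype.card S : ℝ)
    else (cnt3 H n D s a s' : ℝ) / (cnt2 H n D s a : ℝ)

end MDPDefs

lemma sup'_abs_sub_le {A : Type*} [Fintype A] (hne : (Finset.univ : Finset A).Nonempty)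
    (f g : A → ℝ) (c : ℝ) (hfg : ∀ a, |f a - g a| ≤ c) :
    |Finset.univ.sup' hne f - Finset.univ.sup' hne g| ≤ c := by
  rw [abs_sub_le_iff]
  constructor
  · rw [sub_le_iff_le_add]
    apply Finset.sup'_le
    intro a _
    have h1 := (abs_sub_le_iff.mp (hfg a)).1
    calc f a ≤ g a + c := by linarith
      _ ≤ c + Finset.univ.sup' hne g := by
          have := Finset.le_sup' g (Finset.mem_univ a); linarith
  · rw [sub_le_iff_le_add]
    apply Finset.sup'_le
    intro a _
    have h1 := (abs_sub_le_iff.mp (hfg a)).2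
    calc g a ≤ f a + c := by linarith
      _ ≤ c + Finset.univ.sup' hne f := by
          have := Finset.le_sup' f (Finset.mem_univ a); linarith

lemma key_bound {S A : Type*} [Fintype S] [Fintype A] [Nonempty A]
    (P : S → A → S → ℝ) (hP : IsKernel P) (r1 r2 : ℕ → S → A → ℝ) (M : ℝ) (hM : 0 ≤ M) :
    ∀ m h, (∀ t s a, h ≤ t → t < h + m → |r1 t s a - r2 t s a| ≤ M) →
      (∀ s, |VstarT P r1 m h s - VstarT P r2 m h s| ≤ m * M) ∧
      (∀ s a, |QstarT P r1 m h s a - QstarT P r2 m h s a| ≤ m * M) := by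
  intro m
  induction m with
  | zero =>
      intro h _
      constructor
      · intro s; simp [VstarT]
      · intro s a; simp [QstarT]
  | succ m ih =>
      intro h hr
      have hQ : ∀ s a, |QstarT P r1 (m + 1) h s a - QstarT P r2 (m + 1) h s a|
          ≤ (m + 1 : ℕ) * M := by
        intro s a
        have hV := (ih (h + 1) (fun t s a ht1 ht2 => hr t s a (by omega) (by omega))).1
        have step : |∑ s' : S, P s a s' * VstarT P r1 m (h + 1) s'
            - ∑ s' : S, P s a s' * VstarT P r2 m (h + 1) s'| ≤ (m : ℕ) * M := by
          rw [← Finset.sum_sub_distrib]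
          calc |∑ s' : S, (P s a s' * VstarT P r1 m (h + 1) s'
                - P s a s' * VstarT P r2 m (h + 1) s')|
              ≤ ∑ s' : S, |P s a s' * VstarT P r1 m (h + 1) s'
                - P s a s' * VstarT P r2 m (h + 1) s'| := Finset.abs_sum_le_sum_abs _ _
            _ ≤ ∑ s' : S, P s a s' * ((m : ℕ) * M) := by
                apply Finset.sum_le_sum
                intro s' _
                rw [← mul_sub, abs_mul, abs_of_nonneg ((hP s a).1 s')]
                exact mul_le_mul_of_nonneg_left (hV s') ((hP s a).1 s')
            _ = (m : ℕ) * M := by rw [← Finset.sum_mul, (hP s a).2, one_mul]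
        have hrh := hr h s a le_rfl (by omega)
        simp only [QstarT]
        have : r1 h s a + ∑ s' : S, P s a s' * VstarT P r1 m (h + 1) s'
            - (r2 h s a + ∑ s' : S, P s a s' * VstarT P r2 m (h + 1) s')
            = (r1 h s a - r2 h s a) + (∑ s' : S, P s a s' * VstarT P r1 m (h + 1) s'
              - ∑ s' : S, P s a s' * VstarT P r2 m (h + 1) s') := by ring
        rw [this]
        calc _ ≤ _ := abs_add_le _ _
          _ ≤ M + (m : ℕ) * M := add_le_add hrh step
          _ = ((m + 1 : ℕ) : ℝ) * M := by push_cast; ring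
      refine ⟨?_, hQ⟩
      intro s
      have : VstarT P r1 (m + 1) h s = Finset.univ.sup' Finset.univ_nonempty
          (fun a : A => QstarT P r1 (m + 1) h s a) := by
        simp [VstarT, QstarT]
      rw [this]
      have : VstarT P r2 (m + 1) h s = Finset.univ.sup' Finset.univ_nonempty
          (fun a : A => QstarT P r2 (m + 1) h s a) := by
        simp [VstarT, QstarT]
      rw [this]
      exact sup'_abs_sub_le _ _ _ _ (hQ s)

/-- For two reward sequences `u, u'`, the optimal Q-functions of the
corresponding absorbing MDPs satisfy
`max_h ‖Q*_{h,{s0,u}} − Q*_{h,{s0,u'}}‖_∞ ≤ H ⋅ max_{t∈[H]} |u_t − u'_t|`. -/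
theorem stmt3 {S A : Type*} [Fintype S] [Fintype A] [Nonempty A] [DecidableEq S]
    (H : ℕ) (hH : 1 ≤ H) (P : S → A → S → ℝ) (r : S → A → ℝ)
    (hP : IsKernel P) (hr : ∀ s a, 0 ≤ r s a ∧ r s a ≤ 1)
    (s0 : S) (u u' : ℕ → ℝ)
    (h : ℕ) (hh1 : 1 ≤ h) (hhH : h ≤ H) (s : S) (a : A) :
    |QstarT (Pabs P s0) (rAbs (fun _ => r) s0 u) (H + 1 - h) h s a -
        QstarT (Pabs P s0) (rAbs (fun _ => r) s0 u') (H + 1 - h) h s a| ≤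
      (H : ℝ) *
        (Finset.Icc 1 H).sup' (Finset.nonempty_Icc.mpr hH) (fun t => |u t - u' t|) := by
  set M : ℝ := (Finset.Icc 1 H).sup' (Finset.nonempty_Icc.mpr hH) (fun t => |u t - u' t|)
    with hMdef
  have hM : 0 ≤ M := by
    have := Finset.le_sup' (fun t => |u t - u' t|)
      (Finset.mem_Icc.mpr ⟨le_rfl, hH⟩ : 1 ∈ Finset.Icc 1 H)
    exact le_trans (abs_nonneg _) this
  have hPabs : IsKernel (Pabs P s0) := by
    intro s a
    by_cases hs : s = s0
    · constructor
      · intro s'; simp only [Pabs, hs, if_true]; split <;> norm_num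
      · simp [Pabs, hs]
    · constructor
      · intro s'; simp only [Pabs, hs, if_false]; exact (hP s a).1 s'
      · simp only [Pabs, hs, if_false]; exact (hP s a).2
  have hrb : ∀ t s a, h ≤ t → t < h + (H + 1 - h) →
      |rAbs (fun _ => r) s0 u t s a - rAbs (fun _ => r) s0 u' t s a| ≤ M := by
    intro t s a ht1 ht2
    simp only [rAbs]
    by_cases hs : s = s0
    · simp only [hs, if_true]
      exact Finset.le_sup' (fun t => |u t - u' t|)
        (Finset.mem_Icc.mpr ⟨le_trans hh1 ht1, by omega⟩)
    · simp [hs, hM]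
  have := (key_bound (Pabs P s0) hPabs _ _ M hM (H + 1 - h) h hrb).2 s a
  calc _ ≤ ((H + 1 - h : ℕ) : ℝ) * M := this
    _ ≤ (H : ℝ) * M := by
        apply mul_le_mul_of_nonneg_right _ hM
        exact_mod_cast Nat.sub_le_of_le_add (by omega)
end

section
/- Fix a state s of a finite-horizon MDP M with stationary transitions and rewards in [0,1]. If u*_t := V*_t(s) − V*_{t+1}(s) for all t ∈ [H] (these are nonnegative), then the optimal value functions of the singleton absorbing MDP M_{s,u*} coincide with those of M: V*_{h,{s,u*}}(s') = V*_h(s') for all states s' and all h ∈ {1,…,H}. -/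
open Finset

lemma stmt4_key {S A : Type*} [Fintype S] [Fintype A] [Nonempty A] [DecidableEq S]
    (H : ℕ) (P : S → A → S → ℝ) (r : S → A → ℝ)
    (s0 : S) (u : ℕ → ℝ)
    (hu : ∀ t, u t =
      VstarT P (fun _ => r) (H + 1 - t) t s0 - VstarT P (fun _ => r) (H - t) (t + 1) s0) :
    ∀ m, m ≤ H + 1 → ∀ s' : S,
      VstarT (Pabs P s0) (rAbs (fun _ => r) s0 u) m (H + 1 - m) s' =
        VstarT P (fun _ => r) m (H + 1 - m) s' := by
  intro m
  induction m with
  | zero => intro _ s'; rfl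
  | succ m ih =>
    intro hm s'
    have hmH : m ≤ H := Nat.succ_le_succ_iff.mp hm
    have ih' := ih (Nat.le_trans (Nat.le_succ m) hm)
    have ht : H + 1 - (m + 1) + 1 = H + 1 - m := by omega
    simp only [VstarT, ht]
    by_cases hs : s' = s0
    · subst hs
      have habs : ∀ a ∈ Finset.univ,
          rAbs (fun _ => r) s' u (H + 1 - (m + 1)) s' a +
            ∑ s'' : S, Pabs P s' s' a s'' *
              VstarT (Pabs P s') (rAbs (fun _ => r) s' u) m (H + 1 - m) s''
          = u (H + 1 - (m + 1)) + VstarT P (fun _ => r) m (H + 1 - m) s' := by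
        intro a _
        simp [rAbs, Pabs, ite_mul, Finset.sum_ite_eq', ih' s']
      rw [Finset.sup'_congr Finset.univ_nonempty rfl habs, Finset.sup'_const]
      have h1 : H + 1 - (H + 1 - (m + 1)) = m + 1 := by omega
      have h2 : H - (H + 1 - (m + 1)) = m := by omega
      have := hu (H + 1 - (m + 1))
      rw [h1, h2, ht] at this
      rw [this]
      have hexp : VstarT P (fun _ => r) (m + 1) (H + 1 - (m + 1)) s' =
          Finset.univ.sup' Finset.univ_nonempty
            (fun a : A => r s' a + ∑ s'' : S, P s' a s'' *
              VstarT P (fun _ => r) m (H + 1 - (m + 1) + 1) s'') := rfl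
      rw [hexp, ht]
      ring
    · have habs : ∀ a ∈ Finset.univ,
          rAbs (fun _ => r) s0 u (H + 1 - (m + 1)) s' a +
            ∑ s'' : S, Pabs P s0 s' a s'' *
              VstarT (Pabs P s0) (rAbs (fun _ => r) s0 u) m (H + 1 - m) s''
          = r s' a + ∑ s'' : S, P s' a s'' * VstarT P (fun _ => r) m (H + 1 - m) s'' := by
        intro a _
        simp only [rAbs, Pabs, if_neg hs]
        congr 1
        exact Finset.sum_congr rfl (fun s'' _ => by rw [ih' s''])
      rw [Finset.sup'_congr Finset.univ_nonempty rfl habs]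


/-- Singleton absorbing MDP. With `u*_t := V*_t(s0) − V*_{t+1}(s0)`,
the optimal value functions of `M_{s0,u*}` coincide with those of `M`:
`V*_{h,{s0,u*}}(s') = V*_h(s')` for all states `s'` and all `h ∈ {1,…,H}`. -/
theorem stmt4 {S A : Type*} [Fintype S] [Fintype A] [Nonempty A] [DecidableEq S]
    (H : ℕ) (P : S → A → S → ℝ) (r : S → A → ℝ)
    (hP : IsKernel P) (hr : ∀ s a, 0 ≤ r s a ∧ r s a ≤ 1)
    (s0 : S) (u : ℕ → ℝ)
    (hu : ∀ t, u t =
      VstarT P (fun _ => r) (H + 1 - t) t s0 - VstarT P (fun _ => r) (H - t) (t + 1) s0)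
    (h : ℕ) (hh1 : 1 ≤ h) (hhH : h ≤ H) (s' : S) :
    VstarT (Pabs P s0) (rAbs (fun _ => r) s0 u) (H + 1 - h) h s' =
      VstarT P (fun _ => r) (H + 1 - h) h s' := by
  have hk := stmt4_key H P r s0 u hu (H + 1 - h) (by omega)
  have hh : H + 1 - (H + 1 - h) = h := by omega
  rw [hh] at hk
  exact hk s'
end

section
/- Consider a finite-horizon MDP with horizon H = 2, at least two actions, and known reward r given by r₁ ≡ 0 and r₂(s, a₁) = 1, r₂(s, a) = 0 for a ≠ a₁, for every state s. Let P̂ be any estimated transition kernel and let Q̂^π be the model-based estimate computed from P̂ by the Bellman equations Q̂^π_h = r_h + P̂^{π_{h+1}} Q̂^π_{h+1} with Q̂^π_{H+1} = 0. Then sup over all deterministic non-stationary policies π of ‖Q̂^π₁ − Q^π₁‖_∞ is at least (1/2) · sup_{s,a} ‖P̂(·|s,a) − P(·|s,a)‖₁. -/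
open Finset

lemma Qpi_comp {S A : Type*} [Fintype S] [Fintype A] [DecidableEq A]
    (P : S → A → S → ℝ) (a1 : A) (r : ℕ → S → A → ℝ)
    (hr : ∀ s a, r 1 s a = 0 ∧ r 2 s a = (if a = a1 then 1 else 0))
    (π : ℕ → S → A) (s : S) (a : A) :
    Qpi P r (detPol π) 2 1 s a = ∑ s' : S, P s a s' * (if π 2 s' = a1 then 1 else 0) := by
  show Qf P r (detPol π) 2 1 s a = _
  simp only [Qf, (hr _ _).1, (hr _ _).2, detPol, mul_zero, Finset.sum_const_zero,
    add_zero, zero_add]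
  congr 1; ext s'
  congr 1
  simp [ite_mul, Finset.sum_ite_eq', eq_comm]

/-- Reduction to ℓ₁ density estimation for `H = 2`. With rewards
`r₁ ≡ 0` and `r₂(s,a) = 1[a = a₁]`, for any estimated kernel `P̂`,
`sup_{π ∈ Π_g} ‖Q̂₁^π − Q₁^π‖_∞ ≥ (1/2) sup_{s,a} ‖P̂(⋅|s,a) − P(⋅|s,a)‖₁`,
the supremum on the left being over all deterministic (non-stationary) policies. -/
theorem stmt9 {S A : Type*} [Fintype S] [Fintype A] [Nonempty S] [Nonempty A]
    [DecidableEq S] [DecidableEq A]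
    (hA : 2 ≤ Fintype.card A)
    (P Phat : S → A → S → ℝ) (hP : IsKernel P) (hPhat : IsKernel Phat)
    (a1 : A) (r : ℕ → S → A → ℝ)
    (hr : ∀ s a, r 1 s a = 0 ∧ r 2 s a = (if a = a1 then 1 else 0)) :
    (1 / 2) *
        Finset.univ.sup' Finset.univ_nonempty
          (fun q : S × A => ∑ s' : S, |Phat q.1 q.2 s' - P q.1 q.2 s'|) ≤
      ⨆ π : ℕ → S → A,
        Finset.univ.sup' Finset.univ_nonempty
          (fun q : S × A =>
            |Qpi Phat r (detPol π) 2 1 q.1 q.2 - Qpi P r (detPol π) 2 1 q.1 q.2|) := by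
  obtain ⟨a2, ha2⟩ := Fintype.exists_ne_of_one_lt_card (by omega) a1
  set F : (S × A) → ℝ := fun q => ∑ s' : S, |Phat q.1 q.2 s' - P q.1 q.2 s'| with hF
  obtain ⟨q0, -, hq0⟩ := Finset.exists_mem_eq_sup' (Finset.univ_nonempty (α := S × A)) F
  set Δ : S → ℝ := fun s' => Phat q0.1 q0.2 s' - P q0.1 q0.2 s' with hΔ
  set π0 : ℕ → S → A := fun _ s' => if 0 ≤ Δ s' then a1 else a2 with hπ0
  have hsum0 : ∑ s' : S, Δ s' = 0 := by
    simp only [hΔ, Finset.sum_sub_distrib, (hPhat q0.1 q0.2).2, (hP q0.1 q0.2).2, sub_self]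
  have key : Qpi Phat r (detPol π0) 2 1 q0.1 q0.2 - Qpi P r (detPol π0) 2 1 q0.1 q0.2
      = (1 / 2) * F q0 := by
    rw [Qpi_comp Phat a1 r hr, Qpi_comp P a1 r hr, ← Finset.sum_sub_distrib]
    have hpt : ∀ s' : S, Phat q0.1 q0.2 s' * (if π0 2 s' = a1 then 1 else 0)
        - P q0.1 q0.2 s' * (if π0 2 s' = a1 then 1 else 0) = (|Δ s'| + Δ s') / 2 := by
      intro s'
      by_cases h : 0 ≤ Δ s'
      · have hp : π0 2 s' = a1 := by simp [hπ0, h]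
        rw [hp, if_pos rfl, abs_of_nonneg h]
        simp only [hΔ]; ring
      · have hp : π0 2 s' = a2 := by simp [hπ0, h]
        rw [hp, if_neg ha2, abs_of_neg (not_le.mp h)]
        ring
    rw [Finset.sum_congr rfl (fun s' _ => hpt s')]
    rw [← Finset.sum_div, Finset.sum_add_distrib, hsum0, add_zero]
    simp only [hF, hΔ]
    ring
  have habs : ∀ (π : ℕ → S → A) (q : S × A),
      |Qpi Phat r (detPol π) 2 1 q.1 q.2 - Qpi P r (detPol π) 2 1 q.1 q.2| ≤ F q := by
    intro π q
    rw [Qpi_comp Phat a1 r hr, Qpi_comp P a1 r hr, ← Finset.sum_sub_distrib]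
    refine (Finset.abs_sum_le_sum_abs _ _).trans (Finset.sum_le_sum fun s' _ => ?_)
    rw [← sub_mul, abs_mul]
    refine mul_le_of_le_one_right (abs_nonneg _) ?_
    split <;> simp
  set G : (ℕ → S → A) → ℝ := fun π => Finset.univ.sup' Finset.univ_nonempty
      (fun q : S × A => |Qpi Phat r (detPol π) 2 1 q.1 q.2 - Qpi P r (detPol π) 2 1 q.1 q.2|)
    with hG
  have hbdd : BddAbove (Set.range G) := by
    refine ⟨Finset.univ.sup' Finset.univ_nonempty F, ?_⟩
    rintro x ⟨π, rfl⟩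
    exact Finset.sup'_le _ _ fun q _ => (habs π q).trans
      (Finset.le_sup' F (Finset.mem_univ q))
  calc (1 / 2) * Finset.univ.sup' Finset.univ_nonempty F = (1 / 2) * F q0 := by rw [hq0]
    _ = Qpi Phat r (detPol π0) 2 1 q0.1 q0.2 - Qpi P r (detPol π0) 2 1 q0.1 q0.2 := key.symm
    _ ≤ |Qpi Phat r (detPol π0) 2 1 q0.1 q0.2 - Qpi P r (detPol π0) 2 1 q0.1 q0.2| :=
        le_abs_self _
    _ ≤ G π0 := by
        simp only [hG]
        exact Finset.le_sup' (fun q : S × A =>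
          |Qpi Phat r (detPol π0) 2 1 q.1 q.2 - Qpi P r (detPol π0) 2 1 q.1 q.2|)
          (Finset.mem_univ q0)
    _ ≤ ⨆ π, G π := le_ciSup hbdd π0
end

section
/- For a finite-horizon MDP with rewards in [0,1], any policy π, and any h ∈ {1,…,H}: Σ_{t=h}^H Γ^π_{h+1:t} σ^π_{t+1} ≤ √((H−h)³) · 1 elementwise, where σ^π_{t+1} is the vector indexed by (s,a) with entries √(Var_{P(·|s,a)}(V^π_{t+1})) and 1 is the all-ones vector. -/
open Finset

section Stmt19Aux

open Finset

variable {S A : Type*} [Fintype S] [Fintype A]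

lemma wsum_nonneg19 {ι : Type*} [Fintype ι] {w f : ι → ℝ}
    (hw : ∀ i, 0 ≤ w i) (hf : ∀ i, 0 ≤ f i) : 0 ≤ ∑ i, w i * f i :=
  Finset.sum_nonneg fun i _ => mul_nonneg (hw i) (hf i)

lemma wsum_le19 {ι : Type*} [Fintype ι] {w f : ι → ℝ} {c : ℝ}
    (hw : ∀ i, 0 ≤ w i) (hw1 : ∑ i, w i = 1) (hf : ∀ i, f i ≤ c) :
    ∑ i, w i * f i ≤ c := by
  calc ∑ i, w i * f i ≤ ∑ i, w i * c :=
        Finset.sum_le_sum fun i _ => mul_le_mul_of_nonneg_left (hf i) (hw i)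
    _ = c := by rw [← Finset.sum_mul, hw1, one_mul]

lemma sum_sqrt_le_sqrt_sum19 {ι : Type*} (s : Finset ι) (w f : ι → ℝ)
    (hw : ∀ i ∈ s, 0 ≤ w i) (hf : ∀ i ∈ s, 0 ≤ f i) (hw1 : ∑ i ∈ s, w i = 1) :
    ∑ i ∈ s, w i * Real.sqrt (f i) ≤ Real.sqrt (∑ i ∈ s, w i * f i) := by
  have h0 : 0 ≤ ∑ i ∈ s, w i * f i :=
    Finset.sum_nonneg fun i hi => mul_nonneg (hw i hi) (hf i hi)
  have hL : 0 ≤ ∑ i ∈ s, w i * Real.sqrt (f i) :=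
    Finset.sum_nonneg fun i hi => mul_nonneg (hw i hi) (Real.sqrt_nonneg _)
  rw [Real.le_sqrt hL h0]
  have h1 : ∑ i ∈ s, w i * Real.sqrt (f i)
      = ∑ i ∈ s, Real.sqrt (w i) * (Real.sqrt (w i) * Real.sqrt (f i)) := by
    refine Finset.sum_congr rfl fun i hi => ?_
    rw [← mul_assoc, Real.mul_self_sqrt (hw i hi)]
  rw [h1]
  calc (∑ i ∈ s, Real.sqrt (w i) * (Real.sqrt (w i) * Real.sqrt (f i))) ^ 2
      ≤ (∑ i ∈ s, Real.sqrt (w i) ^ 2) * ∑ i ∈ s, (Real.sqrt (w i) * Real.sqrt (f i)) ^ 2 :=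
        Finset.sum_mul_sq_le_sq_mul_sq s _ _
    _ = ∑ i ∈ s, w i * f i := by
        have e1 : ∑ i ∈ s, Real.sqrt (w i) ^ 2 = 1 := by
          rw [← hw1]; exact Finset.sum_congr rfl fun i hi => Real.sq_sqrt (hw i hi)
        have e2 : ∑ i ∈ s, (Real.sqrt (w i) * Real.sqrt (f i)) ^ 2 = ∑ i ∈ s, w i * f i :=
          Finset.sum_congr rfl fun i hi => by
            rw [mul_pow, Real.sq_sqrt (hw i hi), Real.sq_sqrt (hf i hi)]
        rw [e1, e2, one_mul]

lemma sq_wsum_le19 {ι : Type*} [Fintype ι] (w f : ι → ℝ)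
    (hw : ∀ i, 0 ≤ w i) (hw1 : ∑ i, w i = 1) :
    (∑ i, w i * f i) ^ 2 ≤ ∑ i, w i * f i ^ 2 := by
  have h1 : ∑ i, w i * f i = ∑ i, Real.sqrt (w i) * (Real.sqrt (w i) * f i) := by
    refine Finset.sum_congr rfl fun i _ => ?_
    rw [← mul_assoc, Real.mul_self_sqrt (hw i)]
  rw [h1]
  calc (∑ i, Real.sqrt (w i) * (Real.sqrt (w i) * f i)) ^ 2
      ≤ (∑ i, Real.sqrt (w i) ^ 2) * ∑ i, (Real.sqrt (w i) * f i) ^ 2 :=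
        Finset.sum_mul_sq_le_sq_mul_sq _ _ _
    _ = ∑ i, w i * f i ^ 2 := by
        have e1 : ∑ i : ι, Real.sqrt (w i) ^ 2 = 1 := by
          rw [← hw1]; exact Finset.sum_congr rfl fun i _ => Real.sq_sqrt (hw i)
        have e2 : ∑ i : ι, (Real.sqrt (w i) * f i) ^ 2 = ∑ i : ι, w i * f i ^ 2 :=
          Finset.sum_congr rfl fun i _ => by rw [mul_pow, Real.sq_sqrt (hw i)]
        rw [e1, e2, one_mul]

variable {P : S → A → S → ℝ} {π : ℕ → S → A → ℝ}

lemma Ppi_mono19 (hP : IsKernel P) (hπ : IsPolicy π) {i : ℕ} {f g : S → A → ℝ}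
    (hfg : ∀ s a, f s a ≤ g s a) (s : S) (a : A) :
    Ppi P π i f s a ≤ Ppi P π i g s a := by
  unfold Ppi
  refine Finset.sum_le_sum fun s' _ => mul_le_mul_of_nonneg_left ?_ ((hP s a).1 s')
  exact Finset.sum_le_sum fun a' _ => mul_le_mul_of_nonneg_left (hfg s' a') ((hπ i s').1 a')

lemma Ppi_const19 (hP : IsKernel P) (hπ : IsPolicy π) (i : ℕ) (c : ℝ) :
    Ppi P π i (fun _ _ => c) = fun _ _ => c := by
  funext s a
  unfold Ppi
  have h1 : ∀ s' : S, (∑ a' : A, π i s' a' * c) = c := fun s' => by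
    rw [← Finset.sum_mul, (hπ i s').2, one_mul]
  simp_rw [h1, ← Finset.sum_mul, (hP s a).2, one_mul]

lemma Ppi_add19 (i : ℕ) (f g : S → A → ℝ) :
    Ppi P π i (fun s a => f s a + g s a)
      = fun s a => Ppi P π i f s a + Ppi P π i g s a := by
  funext s a
  unfold Ppi
  simp [mul_add, Finset.sum_add_distrib]

lemma Ppi_neg19 (i : ℕ) (f : S → A → ℝ) :
    Ppi P π i (fun s a => -f s a) = fun s a => -(Ppi P π i f s a) := by
  funext s a
  unfold Ppi
  simp [mul_neg, Finset.sum_neg_distrib]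

lemma Ppi_nonneg19 (hP : IsKernel P) (hπ : IsPolicy π) (i : ℕ) {f : S → A → ℝ}
    (hf : ∀ s a, 0 ≤ f s a) (s : S) (a : A) : 0 ≤ Ppi P π i f s a := by
  unfold Ppi
  exact wsum_nonneg19 (fun s' => (hP s a).1 s')
    (fun s' => wsum_nonneg19 (fun a' => (hπ i s').1 a') (fun a' => hf s' a'))

lemma Ppi_le_const19 (hP : IsKernel P) (hπ : IsPolicy π) (i : ℕ) {f : S → A → ℝ} {c : ℝ}
    (hf : ∀ s a, f s a ≤ c) (s : S) (a : A) : Ppi P π i f s a ≤ c := by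
  have := Ppi_mono19 hP hπ (i := i) (g := fun _ _ => c) hf s a
  rwa [Ppi_const19 hP hπ] at this

lemma Ppi_rw19 (i : ℕ) (g : S → A → ℝ) (s : S) (a : A) :
    Ppi P π i g s a = ∑ p : S × A, (P s a p.1 * π i p.1 p.2) * g p.1 p.2 := by
  rw [Fintype.sum_prod_type]
  unfold Ppi
  refine Finset.sum_congr rfl fun s' _ => ?_
  rw [Finset.mul_sum]
  exact Finset.sum_congr rfl fun a' _ => by ring

lemma Ppi_sqrt19 (hP : IsKernel P) (hπ : IsPolicy π) (i : ℕ) {f : S → A → ℝ}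
    (hf : ∀ s a, 0 ≤ f s a) (s : S) (a : A) :
    Ppi P π i (fun s a => Real.sqrt (f s a)) s a ≤ Real.sqrt (Ppi P π i f s a) := by
  rw [Ppi_rw19, Ppi_rw19]
  refine sum_sqrt_le_sqrt_sum19 _ _ _
    (fun p _ => mul_nonneg ((hP s a).1 p.1) ((hπ i p.1).1 p.2))
    (fun p _ => hf p.1 p.2) ?_
  rw [Fintype.sum_prod_type]
  have h1 : ∀ s' : S, ∑ a' : A, P s a s' * π i s' a' = P s a s' := fun s' => by
    rw [← Finset.mul_sum, (hπ i s').2, mul_one]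
  simp_rw [h1]
  exact (hP s a).2

lemma GammaK_mono19 (hP : IsKernel P) (hπ : IsPolicy π) :
    ∀ (k lo : ℕ) {f g : S → A → ℝ}, (∀ s a, f s a ≤ g s a) →
      ∀ s a, GammaK P π lo k f s a ≤ GammaK P π lo k g s a := by
  intro k
  induction k with
  | zero => intro lo f g hfg s a; exact hfg s a
  | succ k ih =>
      intro lo f g hfg s a
      exact Ppi_mono19 hP hπ (fun s' a' => ih (lo + 1) hfg s' a') s a

lemma GammaK_const19 (hP : IsKernel P) (hπ : IsPolicy π) :
    ∀ (k lo : ℕ) (c : ℝ), GammaK P π lo k (fun _ _ => c) = fun _ _ => c := by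
  intro k
  induction k with
  | zero => intro lo c; rfl
  | succ k ih =>
      intro lo c
      show Ppi P π lo (GammaK P π (lo + 1) k fun _ _ => c) = _
      rw [ih, Ppi_const19 hP hπ]

lemma GammaK_add19 : ∀ (k lo : ℕ) (f g : S → A → ℝ),
    GammaK P π lo k (fun s a => f s a + g s a)
      = fun s a => GammaK P π lo k f s a + GammaK P π lo k g s a := by
  intro k
  induction k with
  | zero => intro lo f g; rfl
  | succ k ih =>
      intro lo f g
      show Ppi P π lo (GammaK P π (lo + 1) k fun s a => f s a + g s a) = _
      rw [ih, Ppi_add19]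
      rfl

lemma GammaK_neg19 : ∀ (k lo : ℕ) (f : S → A → ℝ),
    GammaK P π lo k (fun s a => -f s a) = fun s a => -(GammaK P π lo k f s a) := by
  intro k
  induction k with
  | zero => intro lo f; rfl
  | succ k ih =>
      intro lo f
      show Ppi P π lo (GammaK P π (lo + 1) k fun s a => -f s a) = _
      rw [ih, Ppi_neg19]
      rfl

lemma GammaK_nonneg19 (hP : IsKernel P) (hπ : IsPolicy π) :
    ∀ (k lo : ℕ) {f : S → A → ℝ}, (∀ s a, 0 ≤ f s a) →
      ∀ s a, 0 ≤ GammaK P π lo k f s a := by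
  intro k
  induction k with
  | zero => intro lo f hf s a; exact hf s a
  | succ k ih =>
      intro lo f hf s a
      exact Ppi_nonneg19 hP hπ lo (fun s' a' => ih (lo + 1) hf s' a') s a

lemma GammaK_sqrt19 (hP : IsKernel P) (hπ : IsPolicy π) :
    ∀ (k lo : ℕ) {f : S → A → ℝ}, (∀ s a, 0 ≤ f s a) →
      ∀ s a, GammaK P π lo k (fun s a => Real.sqrt (f s a)) s a
        ≤ Real.sqrt (GammaK P π lo k f s a) := by
  intro k
  induction k with
  | zero => intro lo f hf s a; exact le_of_eq rfl
  | succ k ih =>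
      intro lo f hf s a
      show Ppi P π lo (GammaK P π (lo + 1) k fun s a => Real.sqrt (f s a)) s a
        ≤ Real.sqrt (Ppi P π lo (GammaK P π (lo + 1) k f) s a)
      calc Ppi P π lo (GammaK P π (lo + 1) k fun s a => Real.sqrt (f s a)) s a
          ≤ Ppi P π lo (fun s' a' => Real.sqrt (GammaK P π (lo + 1) k f s' a')) s a :=
            Ppi_mono19 hP hπ (fun s' a' => ih (lo + 1) hf s' a') s a
        _ ≤ Real.sqrt (Ppi P π lo (GammaK P π (lo + 1) k f) s a) :=
            Ppi_sqrt19 hP hπ lo (fun s' a' => GammaK_nonneg19 hP hπ k (lo + 1) hf s' a') s a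

lemma GammaK_succ_right19 : ∀ (k lo : ℕ) (f : S → A → ℝ),
    GammaK P π lo (k + 1) f = GammaK P π lo k (Ppi P π (lo + k) f) := by
  intro k
  induction k with
  | zero => intro lo f; rfl
  | succ k ih =>
      intro lo f
      show Ppi P π lo (GammaK P π (lo + 1) (k + 1) f) = _
      rw [ih (lo + 1) f]
      show _ = Ppi P π lo (GammaK P π (lo + 1) k (Ppi P π (lo + (k + 1)) f))
      have : lo + 1 + k = lo + (k + 1) := by omega
      rw [this]

lemma Ppi_combo19 (hP : IsKernel P) (hπ : IsPolicy π) (i : ℕ) (C : ℝ) (f g : S → A → ℝ) :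
    Ppi P π i (fun s a => C + (f s a + -(g s a)))
      = fun s a => C + (Ppi P π i f s a + -(Ppi P π i g s a)) := by
  funext s a
  unfold Ppi
  have inner : ∀ s' : S, ∑ a' : A, π i s' a' * (C + (f s' a' + -(g s' a')))
      = C + ((∑ a' : A, π i s' a' * f s' a') + -(∑ a' : A, π i s' a' * g s' a')) := by
    intro s'
    have expand : ∀ a' : A, π i s' a' * (C + (f s' a' + -(g s' a')))
        = π i s' a' * C + (π i s' a' * f s' a' + -(π i s' a' * g s' a')) := fun a' => by ring
    simp_rw [expand, Finset.sum_add_distrib, Finset.sum_neg_distrib, ← Finset.sum_mul,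
      (hπ i s').2, one_mul]
  simp_rw [inner]
  have expand2 : ∀ s' : S, P s a s' *
      (C + ((∑ a' : A, π i s' a' * f s' a') + -(∑ a' : A, π i s' a' * g s' a')))
      = P s a s' * C + (P s a s' * (∑ a' : A, π i s' a' * f s' a')
        + -(P s a s' * (∑ a' : A, π i s' a' * g s' a'))) := fun s' => by ring
  simp_rw [expand2, Finset.sum_add_distrib, Finset.sum_neg_distrib, ← Finset.sum_mul,
    (hP s a).2, one_mul]

lemma GammaK_combo19 (hP : IsKernel P) (hπ : IsPolicy π) (C : ℝ) :
    ∀ (k lo : ℕ) (u v : S → A → ℝ),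
      GammaK P π lo k (fun s a => C + (u s a + -(v s a)))
        = fun s a => C + (GammaK P π lo k u s a + -(GammaK P π lo k v s a)) := by
  intro k
  induction k with
  | zero => intro lo u v; rfl
  | succ k ih =>
      intro lo u v
      show Ppi P π lo (GammaK P π (lo + 1) k (fun s a => C + (u s a + -(v s a)))) = _
      rw [ih (lo + 1), Ppi_combo19 hP hπ]
      rfl

lemma Qf_bounds19 (hP : IsKernel P) (hπ : IsPolicy π) (r : ℕ → S → A → ℝ)
    (hr : ∀ t s a, 0 ≤ r t s a ∧ r t s a ≤ 1) :
    ∀ (m t : ℕ) (s : S) (a : A), 0 ≤ Qf P r π m t s a ∧ Qf P r π m t s a ≤ m := by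
  intro m
  induction m with
  | zero => intro t s a; simp [Qf]
  | succ m ih =>
      intro t s a
      have hin : ∀ s' : S, 0 ≤ ∑ a' : A, π (t + 1) s' a' * Qf P r π m (t + 1) s' a' ∧
          (∑ a' : A, π (t + 1) s' a' * Qf P r π m (t + 1) s' a') ≤ (m : ℝ) := fun s' =>
        ⟨wsum_nonneg19 (fun a' => (hπ (t + 1) s').1 a') (fun a' => (ih (t + 1) s' a').1),
         wsum_le19 (fun a' => (hπ (t + 1) s').1 a') (hπ (t + 1) s').2
           (fun a' => (ih (t + 1) s' a').2)⟩
      have hout0 : 0 ≤ ∑ s' : S, P s a s' * ∑ a' : A, π (t + 1) s' a' * Qf P r π m (t + 1) s' a' :=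
        wsum_nonneg19 (fun s' => (hP s a).1 s') (fun s' => (hin s').1)
      have hout1 : (∑ s' : S, P s a s' * ∑ a' : A, π (t + 1) s' a' * Qf P r π m (t + 1) s' a')
          ≤ (m : ℝ) :=
        wsum_le19 (fun s' => (hP s a).1 s') (hP s a).2 (fun s' => (hin s').2)
      constructor
      · show 0 ≤ r t s a + _
        exact add_nonneg (hr t s a).1 hout0
      · show r t s a + _ ≤ ((m + 1 : ℕ) : ℝ)
        push_cast
        linarith [(hr t s a).2]

lemma Vpi_bounds19 (hP : IsKernel P) (hπ : IsPolicy π) (r : ℕ → S → A → ℝ)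
    (hr : ∀ t s a, 0 ≤ r t s a ∧ r t s a ≤ 1) (H t : ℕ) (s : S) :
    0 ≤ Vpi P r π H t s ∧ Vpi P r π H t s ≤ ((H + 1 - t : ℕ) : ℝ) := by
  unfold Vpi Qpi
  exact ⟨wsum_nonneg19 (fun a => (hπ t s).1 a)
      (fun a => (Qf_bounds19 hP hπ r hr (H + 1 - t) t s a).1),
    wsum_le19 (fun a => (hπ t s).1 a) (hπ t s).2
      (fun a => (Qf_bounds19 hP hπ r hr (H + 1 - t) t s a).2)⟩

/-- `Bfn P r π H t = P V^π_{t+1}` as a state-action function. -/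
noncomputable def Bfn (P : S → A → S → ℝ) (r : ℕ → S → A → ℝ) (π : ℕ → S → A → ℝ)
    (H t : ℕ) : S → A → ℝ :=
  fun s a => ∑ s' : S, P s a s' * Vpi P r π H (t + 1) s'

lemma Bfn_bounds19 (hP : IsKernel P) (hπ : IsPolicy π) (r : ℕ → S → A → ℝ)
    (hr : ∀ t s a, 0 ≤ r t s a ∧ r t s a ≤ 1) (H t : ℕ) (s : S) (a : A) :
    0 ≤ Bfn P r π H t s a ∧ Bfn P r π H t s a ≤ ((H - t : ℕ) : ℝ) := by
  unfold Bfn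
  have key : ∀ s', 0 ≤ Vpi P r π H (t + 1) s' ∧ Vpi P r π H (t + 1) s' ≤ ((H - t : ℕ) : ℝ) := by
    intro s'
    have := Vpi_bounds19 hP hπ r hr H (t + 1) s'
    have he : H + 1 - (t + 1) = H - t := by omega
    rw [he] at this
    exact this
  exact ⟨wsum_nonneg19 (fun s' => (hP s a).1 s') (fun s' => (key s').1),
    wsum_le19 (fun s' => (hP s a).1 s') (hP s a).2 (fun s' => (key s').2)⟩

lemma Qpi_eq19 (r : ℕ → S → A → ℝ) {H t : ℕ} (ht : t ≤ H) (s : S) (a : A) :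
    Qpi P r π H t s a = r t s a + Bfn P r π H t s a := by
  unfold Qpi Bfn
  have h1 : H + 1 - t = (H - t) + 1 := by omega
  rw [h1]
  show r t s a + _ = r t s a + _
  congr 1
  refine Finset.sum_congr rfl fun s' _ => ?_
  congr 1
  unfold Vpi Qpi
  have h2 : H + 1 - (t + 1) = H - t := by omega
  rw [h2]

lemma varD_eq19 (Q V : S → ℝ) (hQ0 : ∀ s, 0 ≤ Q s) (hQ1 : ∑ s : S, Q s = 1) :
    varD Q V = ∑ s : S, Q s * (V s - ∑ s' : S, Q s' * V s') ^ 2 := by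
  unfold varD
  have expand : ∀ s : S, Q s * (V s - ∑ s' : S, Q s' * V s') ^ 2
      = Q s * V s ^ 2 - 2 * (∑ s' : S, Q s' * V s') * (Q s * V s)
        + (∑ s' : S, Q s' * V s') ^ 2 * Q s := fun s => by ring
  simp_rw [expand, Finset.sum_add_distrib, Finset.sum_sub_distrib, ← Finset.mul_sum, hQ1]
  ring

lemma varD_nonneg19 (Q V : S → ℝ) (hQ0 : ∀ s, 0 ≤ Q s) (hQ1 : ∑ s : S, Q s = 1) :
    0 ≤ varD Q V := by
  rw [varD_eq19 Q V hQ0 hQ1]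
  exact Finset.sum_nonneg fun s _ => mul_nonneg (hQ0 s) (sq_nonneg _)

lemma key_pt19 (hP : IsKernel P) (hπ : IsPolicy π) (r : ℕ → S → A → ℝ)
    (hr : ∀ t s a, 0 ≤ r t s a ∧ r t s a ≤ 1) {H t : ℕ} (ht : t < H) (s : S) (a : A) :
    varD (P s a) (Vpi P r π H (t + 1)) ≤
      (2 * ((H : ℝ) - t) - 1)
        + Ppi P π (t + 1) (fun s1 a1 => Bfn P r π H (t + 1) s1 a1 ^ 2) s a
        - Bfn P r π H t s a ^ 2 := by
  have hB : (∑ s' : S, P s a s' * Vpi P r π H (t + 1) s') = Bfn P r π H t s a := rfl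
  unfold varD
  rw [hB]
  have main : (∑ s' : S, P s a s' * Vpi P r π H (t + 1) s' ^ 2)
      ≤ (2 * ((H : ℝ) - t) - 1)
        + Ppi P π (t + 1) (fun s1 a1 => Bfn P r π H (t + 1) s1 a1 ^ 2) s a := by
    -- pointwise bound in s'
    have hpt : ∀ s' : S, Vpi P r π H (t + 1) s' ^ 2
        ≤ 1 + 2 * (∑ a' : A, π (t + 1) s' a' * Bfn P r π H (t + 1) s' a')
          + (∑ a' : A, π (t + 1) s' a' * Bfn P r π H (t + 1) s' a' ^ 2) := by
      intro s'
      have hV2 : Vpi P r π H (t + 1) s' ^ 2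
          ≤ ∑ a' : A, π (t + 1) s' a' * Qpi P r π H (t + 1) s' a' ^ 2 := by
        unfold Vpi
        exact sq_wsum_le19 _ _ (fun a' => (hπ (t + 1) s').1 a') (hπ (t + 1) s').2
      refine hV2.trans ?_
      have hQ2 : ∀ a' : A, Qpi P r π H (t + 1) s' a' ^ 2
          ≤ 1 + 2 * Bfn P r π H (t + 1) s' a' + Bfn P r π H (t + 1) s' a' ^ 2 := by
        intro a'
        rw [Qpi_eq19 r (by omega) s' a']
        have hr0 := (hr (t + 1) s' a').1
        have hr1 := (hr (t + 1) s' a').2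
        have hB0 := (Bfn_bounds19 hP hπ r hr H (t + 1) s' a').1
        nlinarith
      calc (∑ a' : A, π (t + 1) s' a' * Qpi P r π H (t + 1) s' a' ^ 2)
          ≤ ∑ a' : A, π (t + 1) s' a' *
              (1 + 2 * Bfn P r π H (t + 1) s' a' + Bfn P r π H (t + 1) s' a' ^ 2) :=
            Finset.sum_le_sum fun a' _ =>
              mul_le_mul_of_nonneg_left (hQ2 a') ((hπ (t + 1) s').1 a')
        _ = 1 + 2 * (∑ a' : A, π (t + 1) s' a' * Bfn P r π H (t + 1) s' a')
            + (∑ a' : A, π (t + 1) s' a' * Bfn P r π H (t + 1) s' a' ^ 2) := by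
            have expand : ∀ a' : A, π (t + 1) s' a' *
                (1 + 2 * Bfn P r π H (t + 1) s' a' + Bfn P r π H (t + 1) s' a' ^ 2)
                = π (t + 1) s' a' + 2 * (π (t + 1) s' a' * Bfn P r π H (t + 1) s' a')
                  + π (t + 1) s' a' * Bfn P r π H (t + 1) s' a' ^ 2 := fun a' => by ring
            simp_rw [expand, Finset.sum_add_distrib, ← Finset.mul_sum, (hπ (t + 1) s').2]
    calc (∑ s' : S, P s a s' * Vpi P r π H (t + 1) s' ^ 2)
        ≤ ∑ s' : S, P s a s' *
            (1 + 2 * (∑ a' : A, π (t + 1) s' a' * Bfn P r π H (t + 1) s' a')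
              + (∑ a' : A, π (t + 1) s' a' * Bfn P r π H (t + 1) s' a' ^ 2)) :=
          Finset.sum_le_sum fun s' _ =>
            mul_le_mul_of_nonneg_left (hpt s') ((hP s a).1 s')
      _ = 1 + 2 * Ppi P π (t + 1) (Bfn P r π H (t + 1)) s a
          + Ppi P π (t + 1) (fun s1 a1 => Bfn P r π H (t + 1) s1 a1 ^ 2) s a := by
          unfold Ppi
          have expand : ∀ s' : S, P s a s' *
              (1 + 2 * (∑ a' : A, π (t + 1) s' a' * Bfn P r π H (t + 1) s' a')
                + (∑ a' : A, π (t + 1) s' a' * Bfn P r π H (t + 1) s' a' ^ 2))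
              = P s a s' + 2 * (P s a s' * ∑ a' : A, π (t + 1) s' a' * Bfn P r π H (t + 1) s' a')
                + P s a s' * ∑ a' : A, π (t + 1) s' a' * Bfn P r π H (t + 1) s' a' ^ 2 :=
            fun s' => by ring
          simp_rw [expand, Finset.sum_add_distrib, ← Finset.mul_sum, (hP s a).2]
      _ ≤ (2 * ((H : ℝ) - t) - 1)
          + Ppi P π (t + 1) (fun s1 a1 => Bfn P r π H (t + 1) s1 a1 ^ 2) s a := by
          have hPB : Ppi P π (t + 1) (Bfn P r π H (t + 1)) s a ≤ ((H : ℝ) - t - 1) := by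
            have hub : ∀ s1 a1, Bfn P r π H (t + 1) s1 a1 ≤ ((H : ℝ) - t - 1) := by
              intro s1 a1
              have := (Bfn_bounds19 hP hπ r hr H (t + 1) s1 a1).2
              have he : ((H - (t + 1) : ℕ) : ℝ) = (H : ℝ) - t - 1 := by
                have : H - (t + 1) + (t + 1) = H := by omega
                push_cast [Nat.cast_sub (by omega : t + 1 ≤ H)]
                ring
              rwa [he] at this
            exact Ppi_le_const19 hP hπ (t + 1) hub s a
          linarith
  have hBsq : 0 ≤ Bfn P r π H t s a ^ 2 := sq_nonneg _
  linarith

lemma telescope19 (c : ℕ → ℝ) {h H : ℕ} (hhH : h ≤ H) :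
    ∑ t ∈ Finset.Ico h H, (c (t + 1) - c t) = c H - c h := by
  induction H, hhH using Nat.le_induction with
  | base => simp
  | succ H hH ih => rw [Finset.sum_Ico_succ_top hH, ih]; ring

lemma arith_sum19 {h H : ℕ} (hhH : h ≤ H) :
    ∑ t ∈ Finset.Ico h H, (2 * ((H : ℝ) - t) - 1) = ((H - h : ℕ) : ℝ) ^ 2 := by
  rw [Finset.sum_Ico_eq_sum_range]
  set m := H - h with hm
  have key : ∀ n : ℕ, ∑ j ∈ Finset.range n, (2 * ((j : ℝ) + 1) - 1) = (n : ℝ) ^ 2 := by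
    intro n
    induction n with
    | zero => simp
    | succ n ih => rw [Finset.sum_range_succ, ih]; push_cast; ring
  have refl := Finset.sum_range_reflect (fun j => 2 * ((j : ℝ) + 1) - 1) m
  rw [← key m, ← refl]
  refine Finset.sum_congr rfl fun j hj => ?_
  rw [Finset.mem_range] at hj
  have h1 : ((m - 1 - j : ℕ) : ℝ) = (m : ℝ) - 1 - j := by
    have : m - 1 - j + (j + 1) = m := by omega
    push_cast [Nat.cast_sub (by omega : j ≤ m - 1), Nat.cast_sub (by omega : 1 ≤ m)]
    ring
  rw [h1]
  have hmr : (m : ℝ) = (H : ℝ) - h := by rw [hm, Nat.cast_sub hhH]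
  push_cast
  rw [hmr]
  ring

end Stmt19Aux

/-- For a finite-horizon MDP with rewards in `[0,1]`, any policy `π`
and any `h ∈ [H]`: `∑_{t=h}^H Γ^π_{h+1:t} √(Var_{P(⋅|s,a)}(V^π_{t+1})) ≤ √((H−h)³)`
elementwise. -/
theorem stmt19 {S A : Type*} [Fintype S] [Fintype A]
    (H : ℕ) (P : S → A → S → ℝ) (r : S → A → ℝ)
    (hP : IsKernel P) (hr : ∀ s a, 0 ≤ r s a ∧ r s a ≤ 1)
    (π : ℕ → S → A → ℝ) (hπ : IsPolicy π)
    (h : ℕ) (hh1 : 1 ≤ h) (hhH : h ≤ H) (s : S) (a : A) :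
    ∑ t ∈ Finset.Icc h H,
        GammaK P π (h + 1) (t - h)
          (fun s1 a1 => Real.sqrt (varD (P s1 a1) (Vpi P (fun _ => r) π H (t + 1))))
          s a ≤
      Real.sqrt (((H : ℝ) - (h : ℝ)) ^ 3) := by
  classical
  set r' : ℕ → S → A → ℝ := fun _ => r with hr'def
  have hr' : ∀ t s a, 0 ≤ r' t s a ∧ r' t s a ≤ 1 := fun t s a => hr s a
  set m := H - h with hm
  have hmr : (m : ℝ) = (H : ℝ) - (h : ℝ) := by rw [hm, Nat.cast_sub hhH]
  -- V_{H+1} = 0 and hence B_H = 0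
  have hVtop : ∀ s1 : S, Vpi P r' π H (H + 1) s1 = 0 := by
    intro s1
    unfold Vpi Qpi
    rw [Nat.sub_self]
    simp [Qf]
  have hBtop : ∀ s1 a1, Bfn P r' π H H s1 a1 = 0 := by
    intro s1 a1
    unfold Bfn
    simp [hVtop]
  -- last term of the sum is zero
  have hlast : GammaK P π (h + 1) (H - h)
      (fun s1 a1 => Real.sqrt (varD (P s1 a1) (Vpi P r' π H (H + 1)))) s a = 0 := by
    have hfun : (fun s1 a1 => Real.sqrt (varD (P s1 a1) (Vpi P r' π H (H + 1))))
        = fun (_ : S) (_ : A) => (0 : ℝ) := by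
      funext s1 a1
      have : varD (P s1 a1) (Vpi P r' π H (H + 1)) = 0 := by
        unfold varD
        simp [hVtop]
      rw [this, Real.sqrt_zero]
    rw [hfun, GammaK_const19 hP hπ]
  -- split off the top term
  rw [← Finset.Ico_add_one_right_eq_Icc, Finset.sum_Ico_succ_top hhH, hlast, add_zero]
  -- abbreviations
  set x : ℕ → ℝ := fun u =>
    GammaK P π (h + 1) (u - h)
      (fun s1 a1 => varD (P s1 a1) (Vpi P r' π H (u + 1))) s a with hxdef
  set c : ℕ → ℝ := fun u =>
    GammaK P π (h + 1) (u - h)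
      (fun s2 a2 => Bfn P r' π H u s2 a2 ^ 2) s a with hcdef
  have hx0 : ∀ u, 0 ≤ x u := by
    intro u
    simp only [hxdef]
    exact GammaK_nonneg19 hP hπ _ _
      (fun s1 a1 => varD_nonneg19 _ _ (fun s' => (hP s1 a1).1 s') (hP s1 a1).2) s a
  -- per-term bound for the variance sum
  have hxle : ∀ t ∈ Finset.Ico h H,
      x t ≤ (2 * ((H : ℝ) - t) - 1) + (c (t + 1) - c t) := by
    intro t htm
    rw [Finset.mem_Ico] at htm
    obtain ⟨hth, htH⟩ := htm
    have hkey : ∀ s1 a1, varD (P s1 a1) (Vpi P r' π H (t + 1)) ≤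
        (2 * ((H : ℝ) - t) - 1)
          + (Ppi P π (t + 1) (fun s3 a3 => Bfn P r' π H (t + 1) s3 a3 ^ 2) s1 a1
            + -(Bfn P r' π H t s1 a1 ^ 2)) := by
      intro s1 a1
      have hk := key_pt19 hP hπ r' hr' htH s1 a1
      linarith
    have h1 := GammaK_mono19 hP hπ (t - h) (h + 1)
      (g := fun s1 a1 => (2 * ((H : ℝ) - t) - 1)
        + (Ppi P π (t + 1) (fun s3 a3 => Bfn P r' π H (t + 1) s3 a3 ^ 2) s1 a1
          + -(Bfn P r' π H t s1 a1 ^ 2))) hkey s a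
    have h2 := congrFun (congrFun (GammaK_combo19 hP hπ (2 * ((H : ℝ) - t) - 1) (t - h) (h + 1)
      (Ppi P π (t + 1) (fun s3 a3 => Bfn P r' π H (t + 1) s3 a3 ^ 2))
      (fun s2 a2 => Bfn P r' π H t s2 a2 ^ 2)) s) a
    rw [h2] at h1
    have h3 : GammaK P π (h + 1) (t - h)
        (Ppi P π (t + 1) (fun s3 a3 => Bfn P r' π H (t + 1) s3 a3 ^ 2)) s a = c (t + 1) := by
      simp only [hcdef]
      have e1 : t + 1 - h = (t - h) + 1 := by omega
      have e2 : h + 1 + (t - h) = t + 1 := by omega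
      rw [e1, GammaK_succ_right19 (t - h) (h + 1), e2]
    rw [h3] at h1
    have h4 : GammaK P π (h + 1) (t - h)
        (fun s2 a2 => Bfn P r' π H t s2 a2 ^ 2) s a = c t := by simp only [hcdef]
    rw [h4] at h1
    simp only [hxdef]
    linarith
  -- sum of variances bound
  have hsum : ∑ t ∈ Finset.Ico h H, x t ≤ (m : ℝ) ^ 2 := by
    have hcH : c H = 0 := by
      simp only [hcdef]
      have : (fun s2 a2 => Bfn P r' π H H s2 a2 ^ 2) = fun (_ : S) (_ : A) => (0 : ℝ) := by
        funext s2 a2; rw [hBtop]; ring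
      rw [this, GammaK_const19 hP hπ]
    have hch : 0 ≤ c h := by
      have : c h = Bfn P r' π H h s a ^ 2 := by
        simp only [hcdef, Nat.sub_self]
        rfl
      rw [this]; exact sq_nonneg _
    calc ∑ t ∈ Finset.Ico h H, x t
        ≤ ∑ t ∈ Finset.Ico h H, ((2 * ((H : ℝ) - t) - 1) + (c (t + 1) - c t)) :=
          Finset.sum_le_sum hxle
      _ = (∑ t ∈ Finset.Ico h H, (2 * ((H : ℝ) - t) - 1))
          + ∑ t ∈ Finset.Ico h H, (c (t + 1) - c t) := Finset.sum_add_distrib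
      _ = ((H - h : ℕ) : ℝ) ^ 2 + (c H - c h) := by
          rw [arith_sum19 hhH, telescope19 c hhH]
      _ ≤ (m : ℝ) ^ 2 := by rw [← hm]; linarith
  -- Jensen for sqrt, then Cauchy-Schwarz
  have hterm : ∀ t ∈ Finset.Ico h H,
      GammaK P π (h + 1) (t - h)
        (fun s1 a1 => Real.sqrt (varD (P s1 a1) (Vpi P r' π H (t + 1)))) s a
        ≤ Real.sqrt (x t) := by
    intro t _
    simp only [hxdef]
    exact GammaK_sqrt19 hP hπ (t - h) (h + 1)
      (fun s1 a1 => varD_nonneg19 _ _ (fun s' => (hP s1 a1).1 s') (hP s1 a1).2) s a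
  calc ∑ t ∈ Finset.Ico h H,
        GammaK P π (h + 1) (t - h)
          (fun s1 a1 => Real.sqrt (varD (P s1 a1) (Vpi P r' π H (t + 1)))) s a
      ≤ ∑ t ∈ Finset.Ico h H, Real.sqrt (x t) := Finset.sum_le_sum hterm
    _ ≤ Real.sqrt ((m : ℝ) * ∑ t ∈ Finset.Ico h H, x t) := by
        have hnn : 0 ≤ ∑ t ∈ Finset.Ico h H, Real.sqrt (x t) :=
          Finset.sum_nonneg fun t _ => Real.sqrt_nonneg _
        have hnn2 : (0 : ℝ) ≤ (m : ℝ) * ∑ t ∈ Finset.Ico h H, x t :=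
          mul_nonneg (Nat.cast_nonneg m) (Finset.sum_nonneg fun t _ => hx0 t)
        rw [Real.le_sqrt hnn hnn2]
        have CS := Finset.sum_mul_sq_le_sq_mul_sq (Finset.Ico h H)
          (fun _ => (1 : ℝ)) (fun t => Real.sqrt (x t))
        simp only [one_mul, one_pow] at CS
        have e1 : ∑ t ∈ Finset.Ico h H, Real.sqrt (x t) ^ 2
            = ∑ t ∈ Finset.Ico h H, x t :=
          Finset.sum_congr rfl fun t _ => Real.sq_sqrt (hx0 t)
        have e2 : ∑ _t ∈ Finset.Ico h H, (1 : ℝ) = (m : ℝ) := by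
          rw [Finset.sum_const, Nat.card_Ico, nsmul_eq_mul, mul_one, hm]
        rw [e1, e2] at CS
        exact CS
    _ ≤ Real.sqrt ((m : ℝ) * (m : ℝ) ^ 2) := by
        apply Real.sqrt_le_sqrt
        exact mul_le_mul_of_nonneg_left hsum (Nat.cast_nonneg m)
    _ = Real.sqrt (((H : ℝ) - (h : ℝ)) ^ 3) := by rw [hmr]; ring_nf
end
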